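/- Consider the SIR⁽²⁾S model with vaccination. A stationary state (s̄, ī, r̄₀, r̄₁) with ī > 0 (an endemic equilibrium) exists if and only if the effective reproduction number satisfies R_e > 1, and when R_e > 1 this endemic equilibrium is unique. -/

import Mathlib

set_option maxHeartbeats 1600000


/-- A stationary state of the SIR⁽²⁾S model with vaccination: nonnegative entries summing
to 1, satisfying the stationarity equations with vaccination rates ηs, η₁. -/
def IsStationarySIR2SVac (β γ μ c₁ c₂ ηs η₁ s i r₀ r₁ : ℝ) : Prop :=
  0 ≤ s ∧ 0 ≤ i ∧ 0 ≤ r₀ ∧ 0 ≤ r₁ ∧ s + i + r₀ + r₁ = 1 ∧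
  μ - β * s * i + c₂ * r₁ - μ * s - ηs * s = 0 ∧
  β * s * i + (β / 2) * r₁ * i - (γ + μ) * i = 0 ∧
  ηs * s + γ * i - (c₁ + μ) * r₀ + η₁ * r₁ = 0 ∧
  c₁ * r₀ - (β / 2) * r₁ * i - (c₂ + μ + η₁) * r₁ = 0

private lemma sir2s_quad (β γ μ c₁ c₂ ηs η₁ x : ℝ) :
    (β^2*(γ+c₁+μ)/2)*x^2
      + (ηs*(γ+μ)*β/2 + β*γ*(c₁/2+c₂+μ+η₁) - (β-(γ+μ))*(c₁+μ)*β/2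
          + β*((c₁+μ)*(c₂+μ)+μ*η₁+ηs*c₁/2))*x
      + ((γ+μ)*((c₁+μ)*(c₂+μ)+μ*η₁+ηs*(c₁+c₂+μ+η₁)) - β*((c₁+μ)*(c₂+μ)+μ*η₁+ηs*c₁/2))
    = (ηs*(γ+μ)+β*γ*x)*(β*x/2+(c₁/2+c₂+μ+η₁))
      - (β*(1-x)-(γ+μ))*((c₁+μ)*β*x/2+((c₁+μ)*(c₂+μ)+μ*η₁+ηs*c₁/2)) := by ring

private lemma sir2s_facts (β γ μ c₁ c₂ ηs η₁ s i r₀ r₁ : ℝ)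
    (hβ : 0 < β) (hγ : 0 < γ) (hμ : 0 < μ) (hc₁ : 0 < c₁) (hc₂ : 0 < c₂)
    (hηs : 0 ≤ ηs) (hη₁ : 0 ≤ η₁)
    (hst : IsStationarySIR2SVac β γ μ c₁ c₂ ηs η₁ s i r₀ r₁) (hi : 0 < i) :
    β * s + β * r₁ / 2 = γ + μ ∧
    r₁ * (β*(β*i/2+(c₁/2+c₂+μ+η₁))) = c₁ * (β*(1-i) - (γ+μ)) ∧
    (ηs*(γ+μ)+β*γ*i)*(β*i/2+(c₁/2+c₂+μ+η₁))
      - (β*(1-i)-(γ+μ))*((c₁+μ)*β*i/2+((c₁+μ)*(c₂+μ)+μ*η₁+ηs*c₁/2)) = 0 ∧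
    (γ+μ)*((c₁+μ)*(c₂+μ)+μ*η₁+ηs*(c₁+c₂+μ+η₁)) < β*((c₁+μ)*(c₂+μ)+μ*η₁+ηs*c₁/2) := by
  obtain ⟨hs0, hi0, hr00, hr10, hn, h1, h2, h3, h4⟩ := hst
  -- divided eq 2
  have hu2 : β * s + β * r₁ / 2 = γ + μ := by
    have h : (β * s + β * r₁ / 2 - (γ + μ)) * i = 0 := by linear_combination h2
    rcases mul_eq_zero.mp h with h | h
    · linarith
    · exact absurd h (ne_of_gt hi)
  -- combination of eq3 and eq4
  have hu5 : r₁ * ((c₁+μ)*(β*i/2) + ((c₁+μ)*(c₂+μ)+μ*η₁)) = c₁*ηs*s + c₁*γ*i := by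
    linear_combination (-c₁)*h3 - (c₁+μ)*h4
  -- positivity facts
  have hs1 : s * (β*i + μ + ηs) = μ + c₂ * r₁ := by linear_combination -h1
  have hspos : 0 < s := by
    by_contra h
    push_neg at h
    have hd : (0:ℝ) < β*i + μ + ηs := by
      have := mul_pos hβ hi; linarith
    have h6 := mul_le_mul_of_nonneg_right h hd.le
    rw [zero_mul] at h6
    have := mul_nonneg hc₂.le hr10
    linarith
  have hQpos : 0 < (c₁+μ)*(β*i/2) + ((c₁+μ)*(c₂+μ)+μ*η₁) := by
    have h7 := mul_pos (show (0:ℝ) < c₁+μ by linarith) (show (0:ℝ) < β*i/2 by positivity)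
    have h8 := mul_pos (show (0:ℝ) < c₁+μ by linarith) (show (0:ℝ) < c₂+μ by linarith)
    have h9 := mul_nonneg hμ.le hη₁
    linarith
  have hr1pos : 0 < r₁ := by
    by_contra h
    push_neg at h
    have h6 := mul_le_mul_of_nonneg_right h hQpos.le
    rw [zero_mul] at h6
    have h7 := mul_pos (mul_pos hc₁ hγ) hi
    have h8 := mul_nonneg (mul_nonneg hc₁.le hηs) hs0
    linarith
  have hb2 : β * r₁ / 2 < γ + μ := by
    have := mul_pos hβ hspos; linarith
  have hXpos : 0 < (((c₁+μ)*(c₂+μ)+μ*η₁+ηs*c₁/2) + γ*(c₁/2+c₂+μ+η₁))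
      - (β*r₁/2)*((c₁+μ)/2+η₁-ηs/2) := by
    have hT2 : (((c₁+μ)*(c₂+μ)+μ*η₁+ηs*c₁/2) + γ*(c₁/2+c₂+μ+η₁))
        - (γ+μ)*((c₁+μ)/2+η₁-ηs/2) = (c₁+γ+μ)*(c₂+μ/2+ηs/2) := by ring
    rcases le_or_gt ((c₁+μ)/2+η₁-ηs/2) 0 with hT | hT
    · have h1' : 0 ≤ (β*r₁/2) * (-((c₁+μ)/2+η₁-ηs/2)) := by
        apply mul_nonneg _ (by linarith)
        positivity
      have h7 := mul_pos (show (0:ℝ) < c₁+μ by linarith) (show (0:ℝ) < c₂+μ by linarith)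
      have h8 := mul_nonneg hμ.le hη₁
      have h9 := mul_nonneg hηs hc₁.le
      have h10 := mul_pos hγ (show (0:ℝ) < c₁/2+c₂+μ+η₁ by linarith)
      linarith
    · have h7 := mul_lt_mul_of_pos_right hb2 hT
      have h8 := mul_pos (show (0:ℝ) < c₁+γ+μ by linarith)
        (show (0:ℝ) < c₂+μ/2+ηs/2 by positivity)
      linarith
  -- the key identity
  have hid : c₁*(β*((c₁+μ)*(c₂+μ)+μ*η₁+ηs*c₁/2)
        - (γ+μ)*((c₁+μ)*(c₂+μ)+μ*η₁+ηs*(c₁+c₂+μ+η₁)))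
      = β*i*c₁*((((c₁+μ)*(c₂+μ)+μ*η₁+ηs*c₁/2) + γ*(c₁/2+c₂+μ+η₁))
        - (β*r₁/2)*((c₁+μ)/2+η₁-ηs/2)) := by
    linear_combination (c₁*(((c₁+μ)*(c₂+μ)+μ*η₁+ηs*c₁/2)+ηs*(c₁/2+c₂+μ+η₁)))*hu2
      - (c₁*β*((c₁+μ)*(c₂+μ)+μ*η₁+ηs*c₁/2))*hn
      + (β*((c₁+μ)*(c₂+μ)+μ*η₁+ηs*c₁/2) - β*(c₁/2+c₂+μ+η₁)*(c₁+μ))*h4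
      - (β*(c₁/2+c₂+μ+η₁)*c₁)*h3
  have hfin : (γ+μ)*((c₁+μ)*(c₂+μ)+μ*η₁+ηs*(c₁+c₂+μ+η₁))
      < β*((c₁+μ)*(c₂+μ)+μ*η₁+ηs*c₁/2) := by
    have h7 := mul_pos (mul_pos (mul_pos hβ hi) hc₁) hXpos
    by_contra h
    push_neg at h
    have h8 : c₁*(β*((c₁+μ)*(c₂+μ)+μ*η₁+ηs*c₁/2)
        - (γ+μ)*((c₁+μ)*(c₂+μ)+μ*η₁+ηs*(c₁+c₂+μ+η₁))) ≤ 0 :=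
      mul_nonpos_iff.mpr (Or.inl ⟨hc₁.le, by linarith⟩)
    linarith
  have hr1eq : r₁ * (β*(β*i/2+(c₁/2+c₂+μ+η₁))) = c₁ * (β*(1-i) - (γ+μ)) := by
    linear_combination (β*c₁)*hn - β*h4 - c₁*hu2
  have hseq : s * (β*(β*i/2+(c₁/2+c₂+μ+η₁)))
      = (γ+μ)*(β*i/2+(c₁/2+c₂+μ+η₁)) - c₁*(β*(1-i)-(γ+μ))/2 := by
    linear_combination (β*i/2+(c₁/2+c₂+μ+η₁))*hu2 - (1/2)*hr1eq
  have hcFp : c₁ * ((ηs*(γ+μ)+β*γ*i)*(β*i/2+(c₁/2+c₂+μ+η₁))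
      - (β*(1-i)-(γ+μ))*((c₁+μ)*β*i/2+((c₁+μ)*(c₂+μ)+μ*η₁+ηs*c₁/2))) = 0 := by
    linear_combination (-(β*(β*i/2+(c₁/2+c₂+μ+η₁))))*hu5
      + ((c₁+μ)*(β*i/2) + ((c₁+μ)*(c₂+μ)+μ*η₁))*hr1eq - (c₁*ηs)*hseq
  have hFp : (ηs*(γ+μ)+β*γ*i)*(β*i/2+(c₁/2+c₂+μ+η₁))
      - (β*(1-i)-(γ+μ))*((c₁+μ)*β*i/2+((c₁+μ)*(c₂+μ)+μ*η₁+ηs*c₁/2)) = 0 :=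
    (mul_eq_zero.mp hcFp).resolve_left (ne_of_gt hc₁)
  exact ⟨hu2, hr1eq, hFp, hfin⟩
private lemma sir2s_exists (β γ μ c₁ c₂ ηs η₁ : ℝ)
    (hβ : 0 < β) (hγ : 0 < γ) (hμ : 0 < μ) (hc₁ : 0 < c₁) (hc₂ : 0 < c₂)
    (hηs : 0 ≤ ηs) (hη₁ : 0 ≤ η₁)
    (hcond : (γ+μ)*((c₁+μ)*(c₂+μ)+μ*η₁+ηs*(c₁+c₂+μ+η₁))
      < β*((c₁+μ)*(c₂+μ)+μ*η₁+ηs*c₁/2)) :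
    ∃ s i r₀ r₁ : ℝ, IsStationarySIR2SVac β γ μ c₁ c₂ ηs η₁ s i r₀ r₁ ∧ 0 < i := by
  obtain ⟨A, hA⟩ : ∃ A : ℝ, A = β^2*(γ+c₁+μ)/2 := ⟨_, rfl⟩
  obtain ⟨B, hB⟩ : ∃ B : ℝ, B = ηs*(γ+μ)*β/2 + β*γ*(c₁/2+c₂+μ+η₁)
      - (β-(γ+μ))*(c₁+μ)*β/2 + β*((c₁+μ)*(c₂+μ)+μ*η₁+ηs*c₁/2) := ⟨_, rfl⟩
  obtain ⟨C, hC⟩ : ∃ C : ℝ, C = (γ+μ)*((c₁+μ)*(c₂+μ)+μ*η₁+ηs*(c₁+c₂+μ+η₁))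
      - β*((c₁+μ)*(c₂+μ)+μ*η₁+ηs*c₁/2) := ⟨_, rfl⟩
  have hApos : 0 < A := by rw [hA]; positivity
  have hCneg : C < 0 := by rw [hC]; linarith
  have hdisc : 0 ≤ B^2 - 4*A*C := by
    have h7 := mul_pos hApos (show (0:ℝ) < -C by linarith)
    have h8 := sq_nonneg B
    nlinarith [h7, h8]
  obtain ⟨S, hS0, hS2⟩ : ∃ S : ℝ, 0 ≤ S ∧ S^2 = B^2 - 4*A*C :=
    ⟨Real.sqrt (B^2-4*A*C), Real.sqrt_nonneg _, Real.sq_sqrt hdisc⟩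
  have hSB : B < S := by
    by_contra h
    push_neg at h
    have h7 := mul_nonneg (show (0:ℝ) ≤ B - S by linarith) (show (0:ℝ) ≤ B + S by linarith)
    have h8 := mul_pos hApos (show (0:ℝ) < -C by linarith)
    nlinarith [h7, h8]
  obtain ⟨i, hidef⟩ : ∃ i : ℝ, i = (-B+S)/(2*A) := ⟨_, rfl⟩
  have hipos : 0 < i := by
    rw [hidef]
    apply div_pos (by linarith) (by linarith)
  have h2Ai : 2*A*i = -B + S := by
    rw [hidef]
    field_simp
  have hroot : A*i^2 + B*i + C = 0 := by
    have h5 : (4*A) * (A*i^2+B*i+C) = 0 := by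
      linear_combination (2*A*i + B + S)*h2Ai + hS2
    exact (mul_eq_zero.mp h5).resolve_left (by positivity)
  -- β > γ + μ
  have hMpos : 0 < (c₁+μ)*(c₂+μ)+μ*η₁+ηs*c₁/2 := by
    have h7 := mul_pos (show (0:ℝ) < c₁+μ by linarith) (show (0:ℝ) < c₂+μ by linarith)
    have h8 := mul_nonneg hμ.le hη₁
    have h9 := mul_nonneg hηs hc₁.le
    linarith
  have hβγμ : γ + μ < β := by
    by_contra h
    push_neg at h
    have h7 := mul_le_mul_of_nonneg_right h hMpos.le
    have h8 := mul_nonneg (mul_nonneg hηs (show (0:ℝ) ≤ γ+μ by linarith))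
      (show (0:ℝ) ≤ c₁/2+c₂+μ+η₁ by linarith)
    nlinarith [h7, h8]
  obtain ⟨w, hwdef⟩ : ∃ w : ℝ, w = 1 - (γ+μ)/β := ⟨_, rfl⟩
  have hwpos : 0 < w := by
    rw [hwdef]
    have : (γ+μ)/β < 1 := (div_lt_one hβ).mpr hβγμ
    linarith
  have hw0 : β*(1-w) - (γ+μ) = 0 := by
    rw [hwdef]
    field_simp
    ring
  have hFw : 0 < A*w^2 + B*w + C := by
    have hq := sir2s_quad β γ μ c₁ c₂ ηs η₁ w
    rw [hA, hB, hC, hq, hw0, zero_mul, sub_zero]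
    have h7 : 0 < ηs*(γ+μ) + β*γ*w := by
      have := mul_nonneg hηs (show (0:ℝ) ≤ γ+μ by linarith)
      have := mul_pos (mul_pos hβ hγ) hwpos
      linarith
    have h8 : 0 < β*w/2 + (c₁/2+c₂+μ+η₁) := by
      have := mul_pos hβ hwpos
      linarith
    exact mul_pos h7 h8
  have hiw : i < w := by
    by_contra h
    push_neg at h
    have hAiB : 0 < A*i + B := by
      by_contra h'
      push_neg at h'
      have h7 := mul_nonneg hipos.le (show (0:ℝ) ≤ -(A*i+B) by linarith)
      nlinarith [h7]
    have h9 : 0 < A*(w+i) + B := by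
      have := mul_pos hApos hwpos
      linarith
    have h10 := mul_nonneg (show (0:ℝ) ≤ i - w by linarith) h9.le
    nlinarith [h10]
  -- construction
  have hnum : 0 < β*(1-i) - (γ+μ) := by
    have h7 : β*(1-i) - (γ+μ) = β*(w-i) := by
      rw [hwdef]
      field_simp
      ring
    rw [h7]
    exact mul_pos hβ (by linarith)
  have hden : 0 < β*(β*i/2+(c₁/2+c₂+μ+η₁)) := by
    have := mul_pos hβ hipos
    apply mul_pos hβ
    linarith
  obtain ⟨r₁, hr₁def⟩ : ∃ x : ℝ, x = c₁*(β*(1-i)-(γ+μ)) / (β*(β*i/2+(c₁/2+c₂+μ+η₁))) := ⟨_, rfl⟩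
  obtain ⟨s, hsdef⟩ : ∃ x : ℝ, x = ((γ+μ)*(β*i/2+(c₁/2+c₂+μ+η₁))
      - c₁*(β*(1-i)-(γ+μ))/2) / (β*(β*i/2+(c₁/2+c₂+μ+η₁))) := ⟨_, rfl⟩
  obtain ⟨r₀, hr₀def⟩ : ∃ x : ℝ, x = (β*i/2+c₂+μ+η₁)*r₁/c₁ := ⟨_, rfl⟩
  have hr₁pos : 0 < r₁ := by
    rw [hr₁def]
    exact div_pos (mul_pos hc₁ hnum) hden
  have hr₀pos : 0 < r₀ := by
    rw [hr₀def]
    apply div_pos _ hc₁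
    apply mul_pos _ hr₁pos
    have := mul_pos hβ hipos
    linarith
  have hFpi : (ηs*(γ+μ)+β*γ*i)*(β*i/2+(c₁/2+c₂+μ+η₁))
      - (β*(1-i)-(γ+μ))*((c₁+μ)*β*i/2+((c₁+μ)*(c₂+μ)+μ*η₁+ηs*c₁/2)) = 0 := by
    have hq := sir2s_quad β γ μ c₁ c₂ ηs η₁ i
    rw [← hq, ← hA, ← hB, ← hC]
    exact hroot
  -- equations
  have hr1e : r₁ * (β*(β*i/2+(c₁/2+c₂+μ+η₁))) = c₁*(β*(1-i)-(γ+μ)) := by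
    rw [hr₁def, div_mul_cancel₀ _ (ne_of_gt hden)]
  have hse : s * (β*(β*i/2+(c₁/2+c₂+μ+η₁)))
      = (γ+μ)*(β*i/2+(c₁/2+c₂+μ+η₁)) - c₁*(β*(1-i)-(γ+μ))/2 := by
    rw [hsdef, div_mul_cancel₀ _ (ne_of_gt hden)]
  have hr0e : c₁*r₀ = (β*i/2+c₂+μ+η₁)*r₁ := by
    rw [hr₀def]
    field_simp
  have he2' : β*s + β*r₁/2 = γ+μ := by
    have h7 : (β*s + β*r₁/2 - (γ+μ)) * (β*(β*i/2+(c₁/2+c₂+μ+η₁))) = 0 := by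
      linear_combination β*hse + (β/2)*hr1e
    exact sub_eq_zero.mp ((mul_eq_zero.mp h7).resolve_right (ne_of_gt hden))
  have hn : s + i + r₀ + r₁ = 1 := by
    have h7 : (s + i + r₀ + r₁ - 1) * (c₁*(β*(β*i/2+(c₁/2+c₂+μ+η₁)))) = 0 := by
      linear_combination c₁*hse + (β*(β*i/2+(c₁/2+c₂+μ+η₁)))*hr0e
        + (c₁ + (β*i/2+c₂+μ+η₁))*hr1e
    have h8 : c₁*(β*(β*i/2+(c₁/2+c₂+μ+η₁))) ≠ 0 := ne_of_gt (mul_pos hc₁ hden)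
    exact sub_eq_zero.mp ((mul_eq_zero.mp h7).resolve_right h8)
  have he5c : c₁*ηs*s + c₁*γ*i - r₁*((c₁+μ)*(β*i/2) + ((c₁+μ)*(c₂+μ)+μ*η₁)) = 0 := by
    have h7 : (c₁*ηs*s + c₁*γ*i - r₁*((c₁+μ)*(β*i/2) + ((c₁+μ)*(c₂+μ)+μ*η₁)))
        * (β*(β*i/2+(c₁/2+c₂+μ+η₁))) = 0 := by
      linear_combination (c₁*ηs)*hse - ((c₁+μ)*(β*i/2) + ((c₁+μ)*(c₂+μ)+μ*η₁))*hr1e + c₁*hFpi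
    exact (mul_eq_zero.mp h7).resolve_right (ne_of_gt hden)
  have he3 : ηs*s + γ*i - (c₁+μ)*r₀ + η₁*r₁ = 0 := by
    have h7 : c₁*(ηs*s + γ*i - (c₁+μ)*r₀ + η₁*r₁) = 0 := by
      linear_combination he5c - (c₁+μ)*hr0e
    exact (mul_eq_zero.mp h7).resolve_left (ne_of_gt hc₁)
  have he2 : β*s*i + (β/2)*r₁*i - (γ+μ)*i = 0 := by linear_combination i*he2'
  have he4 : c₁*r₀ - (β/2)*r₁*i - (c₂+μ+η₁)*r₁ = 0 := by linear_combination hr0e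
  have he1 : μ - β*s*i + c₂*r₁ - μ*s - ηs*s = 0 := by
    linear_combination (-μ)*hn - he2 - he3 - he4
  have hspos : 0 < s := by
    have hs1 : s * (β*i + μ + ηs) = μ + c₂*r₁ := by linear_combination -he1
    by_contra h
    push_neg at h
    have hd : (0:ℝ) < β*i + μ + ηs := by
      have := mul_pos hβ hipos; linarith
    have h6 := mul_le_mul_of_nonneg_right h hd.le
    rw [zero_mul] at h6
    have := mul_nonneg hc₂.le hr₁pos.le
    linarith
  exact ⟨s, i, r₀, r₁,
    ⟨hspos.le, hipos.le, hr₀pos.le, hr₁pos.le, hn, he1, he2, he3, he4⟩, hipos⟩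

/-- The SIR⁽²⁾S model with vaccination has an endemic equilibrium (a stationary state with
ī > 0) iff the effective reproduction number R_e = R₀·(D + ηs·c₁/2)/E exceeds 1, where
D = (c₁+μ)(c₂+μ) + μ·η₁ and E = D + ηs·(c₁+c₂+μ+η₁); when R_e > 1 it is unique. -/
theorem sir2s_vac_endemic_equilibrium_iff_and_unique
    (β γ μ c₁ c₂ ηs η₁ : ℝ) (hβ : 0 < β) (hγ : 0 < γ) (hμ : 0 < μ)
    (hc₁ : 0 < c₁) (hc₂ : 0 < c₂) (hηs : 0 ≤ ηs) (hη₁ : 0 ≤ η₁) :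
    ((∃ s i r₀ r₁ : ℝ, IsStationarySIR2SVac β γ μ c₁ c₂ ηs η₁ s i r₀ r₁ ∧ 0 < i) ↔
      1 < β / (γ + μ) *
          (((c₁ + μ) * (c₂ + μ) + μ * η₁) + ηs * c₁ / 2) /
          (((c₁ + μ) * (c₂ + μ) + μ * η₁) + ηs * (c₁ + c₂ + μ + η₁))) ∧
    (1 < β / (γ + μ) *
          (((c₁ + μ) * (c₂ + μ) + μ * η₁) + ηs * c₁ / 2) /
          (((c₁ + μ) * (c₂ + μ) + μ * η₁) + ηs * (c₁ + c₂ + μ + η₁)) →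
      ∃! p : ℝ × ℝ × ℝ × ℝ,
        IsStationarySIR2SVac β γ μ c₁ c₂ ηs η₁ p.1 p.2.1 p.2.2.1 p.2.2.2 ∧ 0 < p.2.1) := by
  have hγμ : 0 < γ + μ := by linarith
  have hEpos : 0 < ((c₁+μ)*(c₂+μ) + μ*η₁) + ηs*(c₁+c₂+μ+η₁) := by
    have h7 := mul_pos (show (0:ℝ) < c₁+μ by linarith) (show (0:ℝ) < c₂+μ by linarith)
    have h8 := mul_nonneg hμ.le hη₁
    have h9 := mul_nonneg hηs (show (0:ℝ) ≤ c₁+c₂+μ+η₁ by linarith)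
    linarith
  have hiff : (1 < β / (γ + μ) *
          (((c₁ + μ) * (c₂ + μ) + μ * η₁) + ηs * c₁ / 2) /
          (((c₁ + μ) * (c₂ + μ) + μ * η₁) + ηs * (c₁ + c₂ + μ + η₁))) ↔
      ((γ+μ)*((c₁+μ)*(c₂+μ)+μ*η₁+ηs*(c₁+c₂+μ+η₁))
        < β*((c₁+μ)*(c₂+μ)+μ*η₁+ηs*c₁/2)) := by
    rw [div_mul_eq_mul_div, div_div, one_lt_div (mul_pos hγμ hEpos)]
  constructor
  · rw [hiff]
    constructor
    · rintro ⟨s, i, r₀, r₁, hst, hi⟩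
      exact (sir2s_facts β γ μ c₁ c₂ ηs η₁ s i r₀ r₁ hβ hγ hμ hc₁ hc₂ hηs hη₁ hst hi).2.2.2
    · intro h
      exact sir2s_exists β γ μ c₁ c₂ ηs η₁ hβ hγ hμ hc₁ hc₂ hηs hη₁ h
  · intro hRe
    have hcond := hiff.mp hRe
    obtain ⟨s, i, r₀, r₁, hst, hi⟩ :=
      sir2s_exists β γ μ c₁ c₂ ηs η₁ hβ hγ hμ hc₁ hc₂ hηs hη₁ hcond
    refine ⟨(s, i, r₀, r₁), ⟨hst, hi⟩, ?_⟩
    rintro ⟨s', i', r₀', r₁'⟩ ⟨hst', hi'⟩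
    obtain ⟨hu2', hr1e', hFp', -⟩ :=
      sir2s_facts β γ μ c₁ c₂ ηs η₁ s' i' r₀' r₁' hβ hγ hμ hc₁ hc₂ hηs hη₁ hst' hi'
    obtain ⟨hu2, hr1e, hFp, -⟩ :=
      sir2s_facts β γ μ c₁ c₂ ηs η₁ s i r₀ r₁ hβ hγ hμ hc₁ hc₂ hηs hη₁ hst hi
    have hq' := (sir2s_quad β γ μ c₁ c₂ ηs η₁ i').trans hFp'
    have hq := (sir2s_quad β γ μ c₁ c₂ ηs η₁ i).trans hFp
    have hii : i' = i := by
      by_contra hne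
      have hdiff : (i' - i) * ((β^2*(γ+c₁+μ)/2)*(i'+i)
          + (ηs*(γ+μ)*β/2 + β*γ*(c₁/2+c₂+μ+η₁) - (β-(γ+μ))*(c₁+μ)*β/2
             + β*((c₁+μ)*(c₂+μ)+μ*η₁+ηs*c₁/2))) = 0 := by
        linear_combination hq' - hq
      have hsum := (mul_eq_zero.mp hdiff).resolve_left (sub_ne_zero.mpr hne)
      have hCval : (γ+μ)*((c₁+μ)*(c₂+μ)+μ*η₁+ηs*(c₁+c₂+μ+η₁))
          - β*((c₁+μ)*(c₂+μ)+μ*η₁+ηs*c₁/2) = (β^2*(γ+c₁+μ)/2)*i'*i := by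
        linear_combination hq' - i'*hsum
      have hApos : (0:ℝ) < β^2*(γ+c₁+μ)/2 := by positivity
      have h7 := mul_pos (mul_pos hApos hi') hi
      linarith
    subst hii
    have hden : 0 < β*(β*i'/2+(c₁/2+c₂+μ+η₁)) := by
      have := mul_pos hβ hi'
      apply mul_pos hβ
      linarith
    have hr1 : r₁' = r₁ := by
      have h7 : (r₁' - r₁) * (β*(β*i'/2+(c₁/2+c₂+μ+η₁))) = 0 := by
        linear_combination hr1e' - hr1e
      exact sub_eq_zero.mp ((mul_eq_zero.mp h7).resolve_right (ne_of_gt hden))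
    have hs : s' = s := by
      have h7 : β*s' = β*s := by
        rw [hr1] at hu2'
        linarith
      exact mul_left_cancel₀ (ne_of_gt hβ) h7
    have hr0 : r₀' = r₀ := by
      obtain ⟨-,-,-,-,-,-,-,-,h4'⟩ := hst'
      obtain ⟨-,-,-,-,-,-,-,-,h4⟩ := hst
      have h7 : c₁*r₀' = c₁*r₀ := by
        linear_combination h4' - h4 + ((β/2)*i' + (c₂+μ+η₁))*hr1
      exact mul_left_cancel₀ (ne_of_gt hc₁) h7
    simp only [Prod.mk.injEq]
    exact ⟨hs, trivial, hr0, hr1⟩
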